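/- arXiv:1208.1238 — 2 statements merged into one kernel-verified Lean document; each statement's English description precedes it below -/
import Mathlib

section
/- Let n ≥ 1 and let μ = (-1)^n. The set of n×n complex matrices B satisfying B·J_n(μ) + Bᵀ = 0 is a complex vector subspace of the n×n matrices of dimension ⌈n/2⌉. -/
open Matrix BigOperators Finset

noncomputable section

/-- The `n × n` upper-triangular Jordan block with eigenvalue `μ`:
`μ` on the diagonal, `1` on the first superdiagonal, `0` elsewhere. -/
def Jmat (n : ℕ) (μ : ℂ) : Matrix (Fin n) (Fin n) ℂ :=
  Matrix.of fun i j => if i = j then μ else if (j : ℕ) = (i : ℕ) + 1 then 1 else 0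

/-- The Pascal-type matrix `Δ_n`, whose 1-based `(i,j)` entry is
`μ^i * (−μ)^(j−1) * C(j−1, n−i)` (here indices are 0-based, so shifted by one). -/
def Delta (n : ℕ) (μ : ℂ) : Matrix (Fin n) (Fin n) ℂ :=
  Matrix.of fun i j =>
    μ ^ ((i : ℕ) + 1) * (-μ) ^ (j : ℕ) * ((j : ℕ).choose (n - ((i : ℕ) + 1)) : ℂ)

/-- The `2n × 2n` block matrix `H_{2n}(μ) = [[0, I],[J_n(μ), 0]]`. -/
def Hmat (n : ℕ) (μ : ℂ) : Matrix (Fin n ⊕ Fin n) (Fin n ⊕ Fin n) ℂ :=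
  Matrix.fromBlocks 0 1 (Jmat n μ) 0

/-- The `n × n` reversed identity matrix: `1` on the antidiagonal, `0` elsewhere. -/
def Rev (n : ℕ) : Matrix (Fin n) (Fin n) ℂ :=
  Matrix.of fun i j => if j = i.rev then 1 else 0

/-!
Write `J = J_n(μ)`, `N = J_n(0)` and `Δ = Delta n μ`. For `μ² = 1` the matrix `Δ` is invertible
and satisfies `Nᵀ Δ J = -μ Δ N`, hence `Jᵀ Δ J = Δ`. For `μ = (-1)ⁿ` moreover `Δᵀ = -Δ Jⁿ`:
`Δ⁻¹ Δᵀ + Jⁿ` commutes with `J`, so it is a polynomial in `N`, and its last column vanishes by an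
alternating binomial identity. Together, `(Δ Nᵃ Jᵉ)ᵀ = -(-μ)ᵃ Δ Nᵃ J^(n-a-e)`.

A solution `B` of `B J + Bᵀ = 0` satisfies `Jᵀ B J = B`, so `Δ⁻¹ B` commutes with `J` and equals
`∑ c_k Nᵏ`. The equation becomes `∑ c_k Nᵏ (J - (-μ)ᵏ J^(n-k)) = 0`, whose first row is a
triangular system with diagonal `μ (1 - (-1)ᵏ)`; so the even coefficients `c_0, c_2, …` determine
`B`. Conversely, the `⌈n/2⌉` solutions `Δ * Pmat n μ k` have a triangular matrix of even
coefficients with nonzero diagonal.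
-/

section

variable {n : ℕ}

lemma Fin.sum_ite_val_eq {M : Type*} [AddCommMonoid M] (m : ℕ) (f : Fin n → M) :
    ∑ k : Fin n, (if (k : ℕ) = m then f k else 0) = if h : m < n then f ⟨m, h⟩ else 0 := by
  split_ifs with h
  · rw [Finset.sum_eq_single ⟨m, h⟩ (fun k _ hk => if_neg fun h' => hk (Fin.ext h')) (by simp)]
    simp
  · exact Finset.sum_eq_zero fun k _ => if_neg (by omega)

lemma pow_mul_mul_pow_eq_smul {R A : Type*} [CommSemiring R] [Semiring A] [Algebra R A]
    {P X Q Y : A} {c : R} (h : P * X * Q = c • (X * Y)) (hQY : Commute Q Y) (m : ℕ) :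
    P ^ m * X * Q ^ m = c ^ m • (X * Y ^ m) := by
  induction m with
  | zero => simp
  | succ m ih =>
    calc P ^ (m + 1) * X * Q ^ (m + 1) = P * (P ^ m * X * Q ^ m) * Q := by
          rw [pow_succ', pow_succ]; simp only [mul_assoc]
      _ = c ^ m • (P * X * Q * Y ^ m) := by
          rw [ih, mul_smul_comm, smul_mul_assoc, mul_assoc, mul_assoc, (hQY.pow_right m).eq.symm]
          simp only [mul_assoc]
      _ = c ^ (m + 1) • (X * Y ^ (m + 1)) := by
          rw [h, smul_mul_assoc, smul_smul, mul_assoc, ← pow_succ', ← pow_succ]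

lemma eq_zero_of_vecMul_eq_zero_of_blockTriangular {ι R : Type*} [Fintype ι] [LinearOrder ι]
    [Semiring R] [NoZeroDivisors R] {d : Matrix ι ι R} (hd : d.BlockTriangular id) {c : ι → R}
    (h : c ᵥ* d = 0) (hdiag : ∀ j, d j j = 0 → c j = 0) : c = 0 := by
  suffices ∀ j, c j = 0 from funext this
  intro j
  induction j using WellFoundedLT.induction with
  | _ j ih =>
    have hj : ∑ k, c k * d k j = c j * d j j := by
      refine Finset.sum_eq_single j (fun k _ hkj => ?_) (by simp)
      rcases lt_or_gt_of_ne hkj with hlt | hgt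
      · rw [ih k hlt, zero_mul]
      · rw [hd hgt, mul_zero]
    have hcol := congrFun h j
    rw [vecMul, dotProduct, hj] at hcol
    exact (mul_eq_zero.mp hcol).elim id (hdiag j)

lemma commute_inv_mul_of_mul_mul_eq {ι K : Type*} [Fintype ι] [DecidableEq ι] [CommRing K]
    {P D B J : Matrix ι ι K} (hD : IsUnit D) (hJ : IsUnit J)
    (hPD : P * D * J = D) (hPB : P * B * J = B) : Commute J (D⁻¹ * B) := by
  have hD' := (Matrix.isUnit_iff_isUnit_det D).mp hD
  have hJ' := (Matrix.isUnit_iff_isUnit_det J).mp hJ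
  have hDP : D⁻¹ * P = J⁻¹ * D⁻¹ := by
    calc D⁻¹ * P = D⁻¹ * (P * D * J) * J⁻¹ * D⁻¹ := by
          simp only [mul_assoc, Matrix.mul_nonsing_inv _ hJ', Matrix.mul_nonsing_inv _ hD',
            mul_one]
      _ = J⁻¹ * D⁻¹ := by
          rw [hPD, Matrix.nonsing_inv_mul _ hD', one_mul]
  calc J * (D⁻¹ * B) = J * (D⁻¹ * P * B * J) := by
        conv_lhs => rw [← hPB]
        simp only [mul_assoc]
    _ = D⁻¹ * B * J := by
        rw [hDP]
        simp only [mul_assoc, Matrix.mul_nonsing_inv_cancel_left _ _ hJ']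

lemma alternating_sum_choose_mul_choose (m r : ℕ) :
    ∑ k ∈ range (m + 1), (-1 : ℤ) ^ k * k.choose r * m.choose k
      = if r = m then (-1 : ℤ) ^ m else 0 := by
  rcases Nat.lt_or_ge m r with hmr | hrm
  · rw [if_neg (by omega)]
    refine Finset.sum_eq_zero fun k hk => ?_
    rw [Finset.mem_range] at hk
    rw [Nat.choose_eq_zero_of_lt (by omega)]
    simp
  have hsplit : range (m + 1) = Finset.Ico 0 r ∪ Finset.Ico r (m + 1) := by
    rw [Finset.range_eq_Ico, Finset.Ico_union_Ico_eq_Ico (by omega) (by omega)]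
  have hlow : ∑ k ∈ Finset.Ico 0 r, (-1 : ℤ) ^ k * k.choose r * m.choose k = 0 :=
    Finset.sum_eq_zero fun k hk => by
      rw [Finset.mem_Ico] at hk
      rw [Nat.choose_eq_zero_of_lt (by omega)]
      simp
  -- `C(m, r + t) C(r + t, r) = C(m, r) C(m - r, t)` turns the rest into an alternating row sum.
  have hhigh : ∀ t ∈ range (m + 1 - r),
      (-1 : ℤ) ^ (r + t) * (r + t).choose r * m.choose (r + t)
        = ((-1 : ℤ) ^ r * m.choose r) * ((-1 : ℤ) ^ t * (m - r).choose t) := by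
    intro t ht
    have hc : m.choose (r + t) * (r + t).choose r = m.choose r * (m - r).choose t := by
      rw [Nat.choose_mul (by omega), Nat.add_sub_cancel_left]
    have hc' : (m.choose (r + t) : ℤ) * (r + t).choose r = m.choose r * (m - r).choose t := by
      exact_mod_cast hc
    rw [pow_add]
    linear_combination ((-1 : ℤ) ^ r * (-1 : ℤ) ^ t) * hc'
  rw [hsplit, Finset.sum_union (Finset.disjoint_left.mpr fun k hk hk' => by
      simp only [Finset.mem_Ico] at hk hk'; omega),
    hlow, zero_add, Finset.sum_Ico_eq_sum_range, Finset.sum_congr rfl hhigh, ← Finset.mul_sum,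
    show m + 1 - r = m - r + 1 by omega, Int.alternating_sum_range_choose]
  by_cases h : r = m
  · subst h
    simp
  · rw [if_neg (by omega), if_neg h, mul_zero]

lemma alternating_sum_choose_mul_choose_succ {n r : ℕ} (hr : r < n) :
    ∑ k ∈ range n, (-1 : ℤ) ^ k * k.choose r * n.choose (k + 1) = (-1 : ℤ) ^ r := by
  induction n generalizing r with
  | zero => omega
  | succ n ih =>
    have hpascal : ∑ k ∈ range (n + 1), (-1 : ℤ) ^ k * k.choose r * (n + 1).choose (k + 1)
        = ∑ k ∈ range (n + 1), (-1 : ℤ) ^ k * k.choose r * n.choose k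
          + ∑ k ∈ range (n + 1), (-1 : ℤ) ^ k * k.choose r * n.choose (k + 1) := by
      rw [← Finset.sum_add_distrib]
      refine Finset.sum_congr rfl fun k _ => ?_
      rw [Nat.choose_succ_succ, Nat.cast_add]
      ring
    rw [hpascal, alternating_sum_choose_mul_choose, Finset.sum_range_succ,
      Nat.choose_succ_self, Nat.cast_zero, mul_zero, add_zero]
    rcases Nat.lt_or_ge r n with h | h
    · rw [if_neg h.ne, ih h, zero_add]
    · obtain rfl : r = n := by omega
      rw [if_pos rfl, Finset.sum_eq_zero fun k hk => by
        rw [Nat.choose_eq_zero_of_lt (by simpa using hk)]; simp, add_zero]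

lemma Jmat_zero_apply (i j : Fin n) : Jmat n 0 i j = if (j : ℕ) = i + 1 then 1 else 0 := by
  by_cases h : i = j <;> simp [Jmat, h]

lemma Jmat_eq_smul_one_add (μ : ℂ) : Jmat n μ = μ • 1 + Jmat n 0 := by
  ext i j
  by_cases h : i = j <;> simp [Jmat, h]

lemma commute_Jmat_Jmat_zero (μ : ℂ) : Commute (Jmat n μ) (Jmat n 0) := by
  rw [Jmat_eq_smul_one_add μ]
  exact ((Commute.one_left _).smul_left μ).add_left (Commute.refl _)

lemma commute_Jmat_zero_of_commute_Jmat {μ : ℂ} {C : Matrix (Fin n) (Fin n) ℂ}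
    (hC : Commute (Jmat n μ) C) : Commute (Jmat n 0) C := by
  have hN : Jmat n 0 = Jmat n μ - μ • 1 := by rw [Jmat_eq_smul_one_add μ, add_sub_cancel_left]
  rw [hN]
  exact hC.sub_left ((Commute.one_left C).smul_left μ)

lemma Jmat_zero_mul_apply (A : Matrix (Fin n) (Fin n) ℂ) (i j : Fin n) :
    (Jmat n 0 * A) i j = if h : (i : ℕ) + 1 < n then A ⟨i + 1, h⟩ j else 0 := by
  simp only [Matrix.mul_apply, Jmat_zero_apply, ite_mul, one_mul, zero_mul, Fin.sum_ite_val_eq]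

lemma mul_Jmat_zero_apply (A : Matrix (Fin n) (Fin n) ℂ) (i j : Fin n) :
    (A * Jmat n 0) i j = if h : 0 < (j : ℕ) then A i ⟨j - 1, by omega⟩ else 0 := by
  have hidx : ∀ k : Fin n, ((j : ℕ) = k + 1) ↔ ((k : ℕ) = j - 1 ∧ 0 < (j : ℕ)) :=
    fun k => by omega
  simp only [Matrix.mul_apply, Jmat_zero_apply, mul_ite, mul_one, mul_zero, hidx, ite_and,
    Fin.sum_ite_val_eq]
  split_ifs <;> first | rfl | omega

lemma Jmat_zero_transpose_mul_apply (A : Matrix (Fin n) (Fin n) ℂ) (i j : Fin n) :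
    ((Jmat n 0)ᵀ * A) i j = if h : 0 < (i : ℕ) then A ⟨i - 1, by omega⟩ j else 0 := by
  rw [← transpose_transpose A, ← transpose_mul, transpose_apply, mul_Jmat_zero_apply]
  rfl

lemma Jmat_zero_pow_mul_apply (a : ℕ) (A : Matrix (Fin n) (Fin n) ℂ) (i j : Fin n) :
    (Jmat n 0 ^ a * A) i j = if h : (i : ℕ) + a < n then A ⟨i + a, h⟩ j else 0 := by
  induction a generalizing i with
  | zero => simp
  | succ a ih =>
    rw [pow_succ', mul_assoc, Jmat_zero_mul_apply]
    split_ifs with h₁ h₂ h₂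
    · rw [ih, dif_pos (by dsimp only; omega)]
      simp only [add_assoc, add_comm 1 a]
    · rw [ih, dif_neg (by dsimp only; omega)]
    · omega
    · rfl

lemma Jmat_zero_pow_apply (a : ℕ) (i j : Fin n) :
    (Jmat n 0 ^ a) i j = if (j : ℕ) = i + a then 1 else 0 := by
  rw [← mul_one (Jmat n 0 ^ a), Jmat_zero_pow_mul_apply]
  simp only [Matrix.one_apply, Fin.ext_iff]
  split_ifs <;> first | rfl | omega

lemma Jmat_pow_apply (μ : ℂ) (e : ℕ) (i j : Fin n) :
    (Jmat n μ ^ e) i j =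
      if (i : ℕ) ≤ j then (e.choose (j - i) : ℂ) * μ ^ (e - (j - i)) else 0 := by
  have hc : Commute (Jmat n 0) (μ • 1) := (Commute.one_right _).smul_right μ
  rw [Jmat_eq_smul_one_add, add_comm, hc.add_pow, Matrix.sum_apply]
  have hidx : ∀ m : ℕ, ((j : ℕ) = i + m) ↔ ((i : ℕ) ≤ j ∧ m = j - i) := fun m => by omega
  simp only [smul_pow, one_pow, Matrix.mul_smul, mul_one, ← nsmul_eq_mul', Matrix.smul_apply,
    Jmat_zero_pow_apply, smul_eq_mul, nsmul_eq_mul, mul_ite, mul_zero, hidx, ite_and,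
    Finset.sum_ite_irrel, Finset.sum_const_zero, Finset.sum_ite_eq', Finset.mem_range]
  split_ifs with h₁ h₂
  · rfl
  · rw [Nat.choose_eq_zero_of_lt (by omega), Nat.cast_zero, zero_mul]
  · rfl

lemma Jmat_zero_pow_mul_Jmat_pow_apply_zero [NeZero n] (μ : ℂ) (a e : ℕ) (j : Fin n) :
    (Jmat n 0 ^ a * Jmat n μ ^ e) 0 j
      = if a ≤ (j : ℕ) then (e.choose (j - a) : ℂ) * μ ^ (e - (j - a)) else 0 := by
  rw [Jmat_zero_pow_mul_apply]
  simp only [Fin.val_zero, zero_add]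
  split_ifs with h₁ h₂ h₂
  · rw [Jmat_pow_apply, if_pos h₂]
  · rw [Jmat_pow_apply, if_neg h₂]
  · omega
  · rfl

lemma isUnit_Jmat {μ : ℂ} (hμ : μ ≠ 0) : IsUnit (Jmat n μ) := by
  have htri : (Jmat n μ).BlockTriangular id := fun i j hij => by
    simp only [id] at hij
    simp only [Jmat, Matrix.of_apply]
    rw [if_neg hij.ne', if_neg (by omega)]
  rw [Matrix.isUnit_iff_isUnit_det, Matrix.det_of_isUpperTriangular htri, isUnit_iff_ne_zero]
  exact Finset.prod_ne_zero_iff.mpr fun i _ => by simpa [Jmat] using hμ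

lemma apply_eq_of_commute_Jmat_zero [NeZero n] {C : Matrix (Fin n) (Fin n) ℂ}
    (hC : Commute (Jmat n 0) C) (i j : Fin n) :
    C i j = if h : (i : ℕ) ≤ j then C 0 ⟨j - i, by omega⟩ else 0 := by
  obtain ⟨i, hi⟩ := i
  induction i generalizing j with
  | zero => simp
  | succ i ih =>
    have h := congrFun (congrFun hC.eq ⟨i, by omega⟩) j
    rw [Jmat_zero_mul_apply, dif_pos hi, mul_Jmat_zero_apply] at h
    rw [h]
    dsimp only
    split_ifs with hj h₂ h₂
    · rw [ih _ (by omega), dif_pos (by dsimp only; omega)]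
      congr 2
      dsimp only
      omega
    · rw [ih _ (by omega), dif_neg (by dsimp only; omega)]
    · omega
    · rfl

lemma eq_sum_smul_Jmat_zero_pow_of_commute [NeZero n] {C : Matrix (Fin n) (Fin n) ℂ}
    (hC : Commute (Jmat n 0) C) : C = ∑ k : Fin n, C 0 k • Jmat n 0 ^ (k : ℕ) := by
  ext i j
  have hidx : ∀ k : Fin n, ((j : ℕ) = i + k) ↔ ((k : ℕ) = j - i ∧ (i : ℕ) ≤ j) :=
    fun k => by omega
  simp only [Matrix.sum_apply, Matrix.smul_apply, Jmat_zero_pow_apply, smul_eq_mul, mul_ite,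
    mul_one, mul_zero, hidx, ite_and, Fin.sum_ite_val_eq, apply_eq_of_commute_Jmat_zero hC i j]
  split_ifs <;> first | rfl | omega

lemma eq_zero_of_commute_Jmat_zero [NeZero n] {C : Matrix (Fin n) (Fin n) ℂ}
    (hC : Commute (Jmat n 0) C) (hlast : ∀ i, C i (Fin.rev 0) = 0) : C = 0 := by
  ext i j
  rw [apply_eq_of_commute_Jmat_zero hC, Matrix.zero_apply]
  split_ifs with h
  · have := hlast ⟨n - 1 - (j - i), by omega⟩
    rw [apply_eq_of_commute_Jmat_zero hC, dif_pos (by simp)] at this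
    convert this using 2
    simp only [Fin.ext_iff, Fin.val_rev, Fin.val_zero]
    omega
  · rfl

variable {μ : ℂ}

lemma ne_zero_of_eq_neg_one_pow (hμ : μ = (-1) ^ n) : μ ≠ 0 := by
  rw [hμ]
  exact pow_ne_zero _ (by norm_num)

lemma pow_self_of_eq_neg_one_pow (hμ : μ = (-1) ^ n) : μ ^ n = μ := by
  rcases Nat.even_or_odd n with he | ho
  · rw [hμ, he.neg_one_pow, one_pow]
  · rw [hμ, ho.neg_one_pow, ho.neg_one_pow]

lemma mul_self_of_eq_neg_one_pow (hμ : μ = (-1) ^ n) : μ * μ = 1 := by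
  rw [hμ, ← pow_add, ← two_mul, pow_mul, neg_one_sq, one_pow]

lemma isUnit_Delta (hμ : μ ≠ 0) : IsUnit (Delta n μ) := by
  have htri : ((Delta n μ).submatrix id Fin.revPerm).BlockTriangular OrderDual.toDual :=
    fun i j hij => by
      have hij' : (i : ℕ) < j := hij
      simp only [Delta, Matrix.submatrix_apply, id, Fin.revPerm_apply, Matrix.of_apply,
        Fin.val_rev]
      rw [Nat.choose_eq_zero_of_lt (by omega), Nat.cast_zero, mul_zero]
  have hdet : ((Delta n μ).submatrix id Fin.revPerm).det ≠ 0 := by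
    rw [Matrix.det_of_isLowerTriangular _ htri]
    refine Finset.prod_ne_zero_iff.mpr fun i _ => ?_
    simp only [Delta, Matrix.submatrix_apply, id, Fin.revPerm_apply, Matrix.of_apply, Fin.val_rev]
    rw [Nat.choose_self, Nat.cast_one, mul_one]
    exact mul_ne_zero (pow_ne_zero _ hμ) (pow_ne_zero _ (neg_ne_zero.mpr hμ))
  rw [Matrix.det_permute'] at hdet
  rw [Matrix.isUnit_iff_isUnit_det, isUnit_iff_ne_zero]
  exact right_ne_zero_of_mul hdet

lemma Jmat_zero_transpose_mul_Delta_mul_Jmat (hμ : μ * μ = 1) :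
    (Jmat n 0)ᵀ * Delta n μ * Jmat n μ = (-μ) • (Delta n μ * Jmat n 0) := by
  ext i j
  rw [Jmat_eq_smul_one_add μ, Matrix.mul_add, Matrix.mul_smul, mul_one]
  simp only [Matrix.smul_apply, Matrix.add_apply, mul_Jmat_zero_apply,
    Jmat_zero_transpose_mul_apply, smul_eq_mul]
  by_cases hi : 0 < (i : ℕ) <;> by_cases hj : 0 < (j : ℕ) <;>
    simp only [hi, hj, dif_pos, dif_neg, not_false_eq_true, Delta, Matrix.of_apply, mul_zero,
      add_zero]
  · obtain ⟨i', hi'⟩ : ∃ i', (i : ℕ) = i' + 1 := ⟨i - 1, by omega⟩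
    obtain ⟨j', hj'⟩ : ∃ j', (j : ℕ) = j' + 1 := ⟨j - 1, by omega⟩
    obtain ⟨s, hs⟩ : ∃ s, n - (i' + 1) = s + 1 := ⟨n - (i' + 1) - 1, by omega⟩
    rw [hi', hj', Nat.add_sub_cancel, Nat.add_sub_cancel, show n - (i' + 1 + 1) = s by omega, hs,
      Nat.choose_succ_succ j' s]
    push_cast
    linear_combination (-((j'.choose (s + 1) : ℂ)) * (-μ) ^ j' * μ ^ (i' + 1)) * hμ
  · rw [show (j : ℕ) = 0 by omega, Nat.choose_eq_zero_of_lt (by omega)]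
    simp
  · rw [show (i : ℕ) = 0 by omega, Nat.choose_eq_zero_of_lt (by omega)]
    simp

lemma Jmat_transpose_mul_Delta_mul_Jmat (hμ : μ * μ = 1) :
    (Jmat n μ)ᵀ * Delta n μ * Jmat n μ = Delta n μ := by
  have hJt : (Jmat n μ)ᵀ = μ • 1 + (Jmat n 0)ᵀ := by
    rw [Jmat_eq_smul_one_add μ, transpose_add, transpose_smul, transpose_one]
  rw [hJt, add_mul, add_mul, Matrix.smul_mul, Matrix.smul_mul, one_mul,
    Jmat_zero_transpose_mul_Delta_mul_Jmat hμ, Jmat_eq_smul_one_add μ, Matrix.mul_add,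
    Matrix.mul_smul, mul_one, smul_add, smul_smul, hμ, one_smul, neg_smul, add_neg_cancel_right]

lemma Delta_transpose_add_Delta_mul_Jmat_pow_apply_rev_zero [NeZero n] (hμ : μ = (-1) ^ n)
    (i : Fin n) : ((Delta n μ)ᵀ + Delta n μ * Jmat n μ ^ n) i (Fin.rev 0) = 0 := by
  have hn : 0 < n := NeZero.pos n
  have hμ2 := mul_self_of_eq_neg_one_pow hμ
  have hterm : ∀ k : Fin n, Delta n μ i k * (Jmat n μ ^ n) k (Fin.rev 0)
      = μ ^ ((i : ℕ) + 2) * ((-1) ^ (k : ℕ) * (k : ℕ).choose (n - 1 - i) * n.choose (k + 1)) := by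
    intro k
    rw [Jmat_pow_apply, Fin.val_rev, Fin.val_zero, if_pos (by omega),
      show n - (0 + 1) - k = n - (k + 1) by omega, Nat.choose_symm (by omega),
      show n - (n - (k + 1)) = k + 1 by omega]
    simp only [Delta, Matrix.of_apply]
    rw [show n - (i + 1) = n - 1 - i by omega, neg_pow]
    have hk : (μ * μ) ^ (k : ℕ) = 1 := by rw [hμ2, one_pow]
    linear_combination ((-1) ^ (k : ℕ) * ((k : ℕ).choose (n - 1 - i) : ℂ) * n.choose (k + 1)
      * μ ^ ((i : ℕ) + 2)) * hk
  have hsum : ∑ k : Fin n, ((-1 : ℂ) ^ (k : ℕ) * (k : ℕ).choose (n - 1 - i) * n.choose (k + 1))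
      = (-1) ^ (n - 1 - i) := by
    rw [Fin.sum_univ_eq_sum_range (fun k => (-1 : ℂ) ^ k * k.choose (n - 1 - i) * n.choose (k + 1))]
    exact_mod_cast alternating_sum_choose_mul_choose_succ (show n - 1 - i < n by omega)
  rw [Matrix.add_apply, transpose_apply, Matrix.mul_apply, Finset.sum_congr rfl fun k _ => hterm k,
    ← Finset.mul_sum, hsum]
  simp only [Delta, Matrix.of_apply, Fin.val_rev, Fin.val_zero]
  rw [show n - (0 + 1) + 1 = n by omega, Nat.sub_self, Nat.choose_zero_right, Nat.cast_one, mul_one,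
    pow_self_of_eq_neg_one_pow hμ, neg_pow]
  have hsign : (-1 : ℂ) ^ (n - 1 - i) * (-1) ^ (i : ℕ) * (-1) = μ := by
    rw [hμ, ← pow_add, ← pow_succ, show n - 1 - i + i + 1 = n by omega]
  have hsq : ((-1 : ℂ) ^ (i : ℕ)) * (-1) ^ (i : ℕ) = 1 := by
    rw [← mul_pow, neg_one_mul, neg_neg, one_pow]
  linear_combination (-μ ^ ((i : ℕ) + 2) * (-1) ^ (i : ℕ)) * hsign
    - (μ ^ ((i : ℕ) + 2) * (-1) ^ (n - 1 - i)) * hsq - (μ ^ ((i : ℕ) + 1) * (-1) ^ (i : ℕ)) * hμ2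

lemma Delta_transpose [NeZero n] (hμ : μ = (-1) ^ n) :
    (Delta n μ)ᵀ = -(Delta n μ * Jmat n μ ^ n) := by
  have hμ0 := ne_zero_of_eq_neg_one_pow hμ
  have hμ2 := mul_self_of_eq_neg_one_pow hμ
  have hΔ := isUnit_Delta (n := n) hμ0
  have hΔ' := (Matrix.isUnit_iff_isUnit_det _).mp hΔ
  set X := (Delta n μ)ᵀ + Delta n μ * Jmat n μ ^ n
  have hinv : Commute (Jmat n μ) ((Delta n μ)⁻¹ * (Delta n μ)ᵀ) := by
    refine commute_inv_mul_of_mul_mul_eq hΔ (isUnit_Jmat hμ0)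
      (Jmat_transpose_mul_Delta_mul_Jmat hμ2) ?_
    have h := congrArg transpose (Jmat_transpose_mul_Delta_mul_Jmat (n := n) hμ2)
    rwa [transpose_mul, transpose_mul, transpose_transpose, ← mul_assoc] at h
  have hT : Commute (Jmat n μ) ((Delta n μ)⁻¹ * X) := by
    rw [Matrix.mul_add, Matrix.nonsing_inv_mul_cancel_left _ _ hΔ']
    exact hinv.add_right (Commute.self_pow _ _)
  have hT0 : (Delta n μ)⁻¹ * X = 0 := by
    refine eq_zero_of_commute_Jmat_zero (commute_Jmat_zero_of_commute_Jmat hT) fun i => ?_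
    rw [Matrix.mul_apply]
    exact Finset.sum_eq_zero fun k _ =>
      mul_eq_zero_of_right _ (Delta_transpose_add_Delta_mul_Jmat_pow_apply_rev_zero hμ k)
  have hX : X = 0 := by
    rw [← Matrix.mul_nonsing_inv_cancel_left _ X hΔ', hT0, mul_zero]
  exact eq_neg_of_add_eq_zero_left hX

lemma Delta_mul_Jmat_zero_pow_mul_Jmat_pow_transpose [NeZero n] (hμ : μ = (-1) ^ n)
    {a e : ℕ} (h : e + a ≤ n) :
    (Delta n μ * (Jmat n 0 ^ a * Jmat n μ ^ e))ᵀ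
      = -((-μ) ^ a • (Delta n μ * (Jmat n 0 ^ a * Jmat n μ ^ (n - (e + a))))) := by
  have hμ2 := mul_self_of_eq_neg_one_pow hμ
  set J := Jmat n μ
  set N := Jmat n 0
  set Δ := Delta n μ
  have hN : (Nᵀ) ^ a * Δ * J ^ a = (-μ) ^ a • (Δ * N ^ a) :=
    pow_mul_mul_pow_eq_smul (Jmat_zero_transpose_mul_Delta_mul_Jmat hμ2)
      (commute_Jmat_Jmat_zero μ) a
  have hJ : (Jᵀ) ^ e * Δ * J ^ e = Δ := by
    simpa using pow_mul_mul_pow_eq_smul (c := (1 : ℂ)) (Y := 1)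
      (by rw [one_smul, mul_one]; exact Jmat_transpose_mul_Delta_mul_Jmat hμ2)
      (Commute.one_right J) e
  have hNJ : N ^ a * J ^ e = J ^ e * N ^ a := ((commute_Jmat_Jmat_zero μ).pow_pow e a).eq.symm
  have hJn : J ^ n = J ^ a * J ^ e * J ^ (n - (e + a)) := by
    rw [← pow_add, ← pow_add]
    congr 1
    omega
  calc (Δ * (N ^ a * J ^ e))ᵀ = -((Jᵀ) ^ e * ((Nᵀ) ^ a * (Δ * J ^ n))) := by
        rw [transpose_mul, transpose_mul, Delta_transpose hμ, transpose_pow, transpose_pow]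
        simp only [mul_neg, mul_assoc]
        rfl
    _ = -((Jᵀ) ^ e * ((Nᵀ) ^ a * Δ * J ^ a) * J ^ e * J ^ (n - (e + a))) := by
        rw [hJn]
        simp only [mul_assoc]
    _ = -((-μ) ^ a • ((Jᵀ) ^ e * Δ * (N ^ a * J ^ e) * J ^ (n - (e + a)))) := by
        rw [hN]
        simp only [Matrix.mul_smul, Matrix.smul_mul, mul_assoc]
    _ = -((-μ) ^ a • ((Jᵀ) ^ e * Δ * J ^ e * (N ^ a * J ^ (n - (e + a))))) := by
        rw [hNJ]
        simp only [mul_assoc]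
    _ = -((-μ) ^ a • (Δ * (N ^ a * J ^ (n - (e + a))))) := by rw [hJ]

def solutionSpace (n : ℕ) (μ : ℂ) : Submodule ℂ (Matrix (Fin n) (Fin n) ℂ) :=
  LinearMap.ker
    (LinearMap.mulRight ℂ (Jmat n μ) + (transposeLinearEquiv (Fin n) (Fin n) ℂ ℂ).toLinearMap)

lemma mem_solutionSpace {B : Matrix (Fin n) (Fin n) ℂ} :
    B ∈ solutionSpace n μ ↔ B * Jmat n μ + Bᵀ = 0 :=
  Iff.rfl

lemma Jmat_transpose_mul_mul_Jmat_of_mem_solutionSpace {B : Matrix (Fin n) (Fin n) ℂ}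
    (hB : B ∈ solutionSpace n μ) : (Jmat n μ)ᵀ * B * Jmat n μ = B := by
  have hBJ : B * Jmat n μ = -Bᵀ := eq_neg_of_add_eq_zero_left (mem_solutionSpace.mp hB)
  calc (Jmat n μ)ᵀ * B * Jmat n μ = -((Jmat n μ)ᵀ * Bᵀ) := by rw [mul_assoc, hBJ, mul_neg]
    _ = B := by rw [← transpose_mul, hBJ, transpose_neg, transpose_transpose, neg_neg]

/-- By the transpose formula for `Δ Nᵃ Jᵉ`, the matrix `Δ N^(2k) J^e` solves `B J + Bᵀ = 0`
when `2 e + 2 k + 1 = n`; for even `n` no such `e` exists, and the two exponents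
`e + e' = n - 2k - 1` are paired instead. -/
def Pmat (n : ℕ) (μ : ℂ) (k : ℕ) : Matrix (Fin n) (Fin n) ℂ :=
  Jmat n 0 ^ (2 * k) * Jmat n μ ^ (n / 2 - k)
    + if Even n then Jmat n 0 ^ (2 * k) * Jmat n μ ^ (n / 2 - 1 - k) else 0

lemma Delta_mul_Pmat_mem_solutionSpace [NeZero n] (hμ : μ = (-1) ^ n) {k : ℕ}
    (hk : k < (n + 1) / 2) : Delta n μ * Pmat n μ k ∈ solutionSpace n μ := by
  have hμ2 := mul_self_of_eq_neg_one_pow hμ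
  have hstep : ∀ e : ℕ, Delta n μ * (Jmat n 0 ^ (2 * k) * Jmat n μ ^ e) * Jmat n μ
      = Delta n μ * (Jmat n 0 ^ (2 * k) * Jmat n μ ^ (e + 1)) := fun e => by
    rw [pow_succ]
    simp only [mul_assoc]
  have hsign : (-μ) ^ (2 * k) = 1 := by rw [pow_mul, neg_sq, sq, hμ2, one_pow]
  rw [mem_solutionSpace]
  rcases Nat.even_or_odd n with ⟨h, hh⟩ | ⟨h, hh⟩
  · rw [Pmat, if_pos ⟨h, hh⟩, Matrix.mul_add, Matrix.add_mul, transpose_add, hstep, hstep,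
      Delta_mul_Jmat_zero_pow_mul_Jmat_pow_transpose hμ (by omega),
      Delta_mul_Jmat_zero_pow_mul_Jmat_pow_transpose hμ (by omega), hsign, one_smul, one_smul,
      show n / 2 - k + 1 = n - (n / 2 - 1 - k + 2 * k) by omega,
      show n / 2 - 1 - k + 1 = n - (n / 2 - k + 2 * k) by omega]
    abel
  · rw [Pmat, if_neg (Nat.not_even_iff_odd.mpr ⟨h, hh⟩), add_zero, hstep,
      Delta_mul_Jmat_zero_pow_mul_Jmat_pow_transpose hμ (by omega), hsign, one_smul,
      show n / 2 - k + 1 = n - (n / 2 - k + 2 * k) by omega, add_neg_cancel]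

lemma Pmat_apply_zero_of_lt [NeZero n] {k l : ℕ} (hl : 2 * l < n) (hlk : l < k) :
    Pmat n μ k 0 ⟨2 * l, hl⟩ = 0 := by
  rw [Pmat]
  split_ifs <;> simp only [Matrix.add_apply, Matrix.zero_apply,
    Jmat_zero_pow_mul_Jmat_pow_apply_zero, if_neg (show ¬ 2 * k ≤ 2 * l by omega), add_zero]

lemma Pmat_apply_zero_self_ne_zero [NeZero n] (hμ : μ = (-1) ^ n) {k : ℕ} (hk : 2 * k < n) :
    Pmat n μ k 0 ⟨2 * k, hk⟩ ≠ 0 := by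
  rw [Pmat]
  split_ifs with he <;> simp only [Matrix.add_apply, Matrix.zero_apply,
    Jmat_zero_pow_mul_Jmat_pow_apply_zero, le_refl, if_true, Nat.sub_self, Nat.choose_zero_right,
    Nat.cast_one, one_mul, Nat.sub_zero, add_zero]
  · rw [hμ, he.neg_one_pow, one_pow, one_pow]
    norm_num
  · rw [hμ]
    exact pow_ne_zero _ (pow_ne_zero _ (by norm_num))

lemma eq_Delta_mul_sum_of_mem_solutionSpace [NeZero n] (hμ : μ = (-1) ^ n)
    {B : Matrix (Fin n) (Fin n) ℂ} (hB : B ∈ solutionSpace n μ) :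
    B = Delta n μ * ∑ k : Fin n, ((Delta n μ)⁻¹ * B) 0 k • Jmat n 0 ^ (k : ℕ) := by
  have hμ0 := ne_zero_of_eq_neg_one_pow hμ
  have hΔ := isUnit_Delta (n := n) hμ0
  have hC : Commute (Jmat n μ) ((Delta n μ)⁻¹ * B) :=
    commute_inv_mul_of_mul_mul_eq hΔ (isUnit_Jmat hμ0)
      (Jmat_transpose_mul_Delta_mul_Jmat (mul_self_of_eq_neg_one_pow hμ))
      (Jmat_transpose_mul_mul_Jmat_of_mem_solutionSpace hB)
  rw [← eq_sum_smul_Jmat_zero_pow_of_commute (commute_Jmat_zero_of_commute_Jmat hC),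
    Matrix.mul_nonsing_inv_cancel_left _ _ ((Matrix.isUnit_iff_isUnit_det _).mp hΔ)]

lemma sum_smul_Jmat_zero_pow_mul_sub_eq_zero [NeZero n] (hμ : μ = (-1) ^ n) {c : Fin n → ℂ}
    (h : Delta n μ * ∑ k : Fin n, c k • Jmat n 0 ^ (k : ℕ) ∈ solutionSpace n μ) :
    ∑ k : Fin n, c k • (Jmat n 0 ^ (k : ℕ) * Jmat n μ
      - (-μ) ^ (k : ℕ) • (Jmat n 0 ^ (k : ℕ) * Jmat n μ ^ (n - k))) = 0 := by
  have hμ0 := ne_zero_of_eq_neg_one_pow hμ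
  have hΔ := (Matrix.isUnit_iff_isUnit_det _).mp (isUnit_Delta (n := n) hμ0)
  have htr : ∀ k : Fin n, (Delta n μ * Jmat n 0 ^ (k : ℕ))ᵀ
      = -((-μ) ^ (k : ℕ) • (Delta n μ * (Jmat n 0 ^ (k : ℕ) * Jmat n μ ^ (n - k)))) := fun k => by
    simpa using Delta_mul_Jmat_zero_pow_mul_Jmat_pow_transpose hμ (a := k) (e := 0) (by omega)
  have hmul : Delta n μ * ∑ k : Fin n, c k • (Jmat n 0 ^ (k : ℕ) * Jmat n μ
      - (-μ) ^ (k : ℕ) • (Jmat n 0 ^ (k : ℕ) * Jmat n μ ^ (n - k)))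
      = (Delta n μ * ∑ k : Fin n, c k • Jmat n 0 ^ (k : ℕ)) * Jmat n μ
        + (Delta n μ * ∑ k : Fin n, c k • Jmat n 0 ^ (k : ℕ))ᵀ := by
    simp only [Matrix.mul_sum, sub_eq_add_neg, Matrix.mul_add, Matrix.mul_neg, Matrix.mul_smul,
      smul_add, smul_neg, Finset.sum_add_distrib, Finset.sum_neg_distrib, Finset.sum_mul,
      transpose_sum, transpose_smul, htr, Matrix.smul_mul, mul_assoc]
  rw [← Matrix.nonsing_inv_mul_cancel_left _ (∑ k : Fin n, _) hΔ, hmul, mem_solutionSpace.mp h,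
    mul_zero]

lemma eq_zero_of_sum_smul_Jmat_zero_pow_mul_sub_eq_zero [NeZero n] (hμ : μ = (-1) ^ n)
    {c : Fin n → ℂ} (hrel : ∑ k : Fin n, c k • (Jmat n 0 ^ (k : ℕ) * Jmat n μ
      - (-μ) ^ (k : ℕ) • (Jmat n 0 ^ (k : ℕ) * Jmat n μ ^ (n - k))) = 0)
    (heven : ∀ j : Fin n, Even (j : ℕ) → c j = 0) : c = 0 := by
  have hμ0 := ne_zero_of_eq_neg_one_pow hμ
  set d : Matrix (Fin n) (Fin n) ℂ := Matrix.of fun k j =>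
    (Jmat n 0 ^ (k : ℕ) * Jmat n μ ^ 1) 0 j
      - (-μ) ^ (k : ℕ) * (Jmat n 0 ^ (k : ℕ) * Jmat n μ ^ (n - k)) 0 j
  have hd : d.BlockTriangular id := fun k j hjk => by
    simp only [id] at hjk
    simp only [d, Matrix.of_apply, Jmat_zero_pow_mul_Jmat_pow_apply_zero,
      if_neg (show ¬ (k : ℕ) ≤ j by omega), mul_zero, sub_zero]
  -- on the diagonal `(-μ)^j μ^(n-j) = (-1)^j μ`, so odd `j` gives `2 μ ≠ 0`
  have hdiag : ∀ j, d j j = 0 → c j = 0 := fun j hj => by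
    refine heven j (Nat.not_odd_iff_even.mp fun hodd => ?_)
    simp only [d, Matrix.of_apply, Jmat_zero_pow_mul_Jmat_pow_apply_zero] at hj
    simp only [le_refl, if_true, Nat.sub_self, Nat.choose_zero_right, Nat.cast_one, one_mul,
      Nat.sub_zero, pow_one, hodd.neg_pow, neg_mul, ← pow_add, Nat.add_sub_cancel' j.isLt.le,
      pow_self_of_eq_neg_one_pow hμ, sub_neg_eq_add] at hj
    exact hμ0 (by linear_combination hj / 2)
  refine eq_zero_of_vecMul_eq_zero_of_blockTriangular hd (funext fun j => ?_) hdiag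
  have := congrFun (congrFun hrel 0) j
  simp only [Matrix.sum_apply, Matrix.smul_apply, Matrix.sub_apply, smul_eq_mul,
    Matrix.zero_apply] at this
  simpa [vecMul, dotProduct, d, mul_sub] using this

def evenCoords (n : ℕ) [NeZero n] (μ : ℂ) :
    Matrix (Fin n) (Fin n) ℂ →ₗ[ℂ] (Fin ((n + 1) / 2) → ℂ) where
  toFun B l := ((Delta n μ)⁻¹ * B) 0 ⟨2 * l, by omega⟩
  map_add' A B := by
    ext l
    simp [Matrix.mul_add]
  map_smul' c B := by
    ext l
    simp

lemma eq_zero_of_mem_solutionSpace_of_evenCoords_eq_zero [NeZero n] (hμ : μ = (-1) ^ n)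
    {B : Matrix (Fin n) (Fin n) ℂ} (hB : B ∈ solutionSpace n μ) (h : evenCoords n μ B = 0) :
    B = 0 := by
  have hBc := eq_Delta_mul_sum_of_mem_solutionSpace hμ hB
  have hc : (fun k => ((Delta n μ)⁻¹ * B) 0 k) = 0 := by
    refine eq_zero_of_sum_smul_Jmat_zero_pow_mul_sub_eq_zero hμ
      (sum_smul_Jmat_zero_pow_mul_sub_eq_zero hμ (hBc ▸ hB)) fun j ⟨l, hl⟩ => ?_
    have := congrFun h ⟨l, by omega⟩
    simp only [evenCoords, LinearMap.coe_mk, AddHom.coe_mk, Pi.zero_apply] at this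
    convert this using 2
    exact Fin.ext (by dsimp only; omega)
  rw [hBc]
  simp [hc]

lemma linearIndependent_Delta_mul_Pmat [NeZero n] (hμ : μ = (-1) ^ n) :
    LinearIndependent ℂ fun k : Fin ((n + 1) / 2) => Delta n μ * Pmat n μ k := by
  have hμ0 := ne_zero_of_eq_neg_one_pow hμ
  have hΔ := (Matrix.isUnit_iff_isUnit_det _).mp (isUnit_Delta (n := n) hμ0)
  rw [Fintype.linearIndependent_iff]
  intro g hg
  have hP : ∑ k, g k • Pmat n μ k = 0 := by
    rw [← Matrix.nonsing_inv_mul_cancel_left _ (∑ k, g k • Pmat n μ k) hΔ, Matrix.mul_sum]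
    simp only [Matrix.mul_smul, hg, mul_zero]
  set d : Matrix (Fin ((n + 1) / 2)) (Fin ((n + 1) / 2)) ℂ :=
    Matrix.of fun k l => Pmat n μ k 0 ⟨2 * l, by omega⟩
  have hd : d.BlockTriangular id := fun k l hlk => Pmat_apply_zero_of_lt _ hlk
  have hg0 : g = 0 := by
    refine eq_zero_of_vecMul_eq_zero_of_blockTriangular hd (funext fun l => ?_)
      fun k hk => absurd hk (Pmat_apply_zero_self_ne_zero hμ _)
    have := congrFun (congrFun hP 0) ⟨2 * l, by omega⟩
    simpa [vecMul, dotProduct, d, Matrix.sum_apply, mul_comm] using this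
  exact congrFun hg0

lemma finrank_solutionSpace [NeZero n] (hμ : μ = (-1) ^ n) :
    Module.finrank ℂ (solutionSpace n μ) = (n + 1) / 2 := by
  apply le_antisymm
  · have hinj : Function.Injective ((evenCoords n μ).comp (solutionSpace n μ).subtype) := by
      rw [← LinearMap.ker_eq_bot, LinearMap.ker_eq_bot']
      exact fun B hB => Subtype.ext (eq_zero_of_mem_solutionSpace_of_evenCoords_eq_zero hμ B.2 hB)
    simpa using LinearMap.finrank_le_finrank_of_injective hinj
  · have hli : LinearIndependent ℂ fun k : Fin ((n + 1) / 2) =>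
        (⟨Delta n μ * Pmat n μ k, Delta_mul_Pmat_mem_solutionSpace hμ k.isLt⟩ :
          solutionSpace n μ) :=
      LinearIndependent.of_comp (solutionSpace n μ).subtype (linearIndependent_Delta_mul_Pmat hμ)
    simpa using hli.fintype_card_le_finrank

end

/-- the solutions `B` of `B·J_n(μ) + Bᵀ = 0` (with `μ = (-1)^n`) form a
complex subspace of dimension `⌈n/2⌉`. -/
theorem stmt_14 (n : ℕ) (hn : 1 ≤ n) (μ : ℂ) (hμ : μ = (-1) ^ n) :
    ∃ S : Submodule ℂ (Matrix (Fin n) (Fin n) ℂ),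
      (∀ B, B ∈ S ↔ B * Jmat n μ + Bᵀ = 0) ∧
      Module.finrank ℂ S = (n + 1) / 2 := by
  have : NeZero n := ⟨by omega⟩
  exact ⟨solutionSpace n μ, fun _ => mem_solutionSpace, finrank_solutionSpace hμ⟩
end
end

section
/- Let n ≥ 1 and let μ = (-1)^n. The set of 2n×2n complex matrices X satisfying X·H_{2n}(μ) + H_{2n}(μ)·Xᵀ = 0 is a complex vector subspace of the 2n×2n matrices of dimension n + 2·⌈n/2⌉. -/
open Matrix BigOperators Finset

noncomputable section

/-!
Write `X = [[A, B], [C, D]]` and `J = J_n(μ)`. The equation `X H + H Xᵀ = 0` says exactly that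
`A` commutes with `Jᵀ`, that `D = -Aᵀ`, and that `B` and `C` solve the "twisted skew" equations
`B + Jᵀ Bᵀ = 0` and `C + J Cᵀ = 0`. The centralizer of the nonderogatory matrix `Jᵀ` has dimension
`n`, and conjugation by the reversal matrix carries `Jᵀ` to `J`, so the dimension is `n + 2 s(J)`
with `s(K) = dim {C | C + K Cᵀ = 0}`.

Solutions of `C + K Cᵀ = 0` and of `C - K Cᵀ = 0` both satisfy `K C Kᵀ = C` and meet only in `0`.
For `K = J_n(ν)` a matrix with `K C Kᵀ = C` is determined by its first column, because `e₀` is a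
cyclic vector of `Jᵀ`; conjugating by `diag((-1)ⁱ)` turns `-J_n(ν)` into `J_n(-ν)`. Hence
`s(J_n(ν)) + s(J_n(-ν)) ≤ n`. Conversely, for each `k < n` there is an explicit integer solution of
`C + J_n((-1)^(k+1)) Cᵀ = 0` supported on `i + j ≤ k` with a nonzero entry at `(k, 0)`; these are
triangular, hence independent, and give `s(J_n((-1)^m)) ≥ ⌈m/2⌉` for `m ≤ n`. Taking `m = n` and
`m = n - 1` forces `s(J_n((-1)^n)) = ⌈n/2⌉`.
-/

namespace Matrix

variable {ι R K : Type*} [Fintype ι]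

theorem mulVec_eq_zero_of_shift [CommRing R] {M A : Matrix ι ι R}
    (hA : ∀ w, M *ᵥ w = 0 → M *ᵥ (A *ᵥ w) = 0) {c : R} {v : ℕ → ι → R}
    (hv : ∀ d, A *ᵥ v d = c • v d + v (d + 1)) (h0 : M *ᵥ v 0 = 0) (d : ℕ) : M *ᵥ v d = 0 := by
  induction d with
  | zero => exact h0
  | succ d ih =>
    rw [show v (d + 1) = A *ᵥ v d - c • v d by rw [hv]; abel, mulVec_sub, mulVec_smul,
      hA _ ih, ih, smul_zero, sub_zero]

variable [DecidableEq ι]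

section CommRing

variable [CommRing R]

def twistedSkew (A : Matrix ι ι R) : Submodule R (Matrix ι ι R) :=
  LinearMap.ker
    (LinearMap.id + LinearMap.mulLeft R A ∘ₗ (transposeLinearEquiv ι ι R R).toLinearMap)

def congrFixed (A : Matrix ι ι R) : Submodule R (Matrix ι ι R) :=
  LinearMap.ker (LinearMap.mulLeft R A ∘ₗ LinearMap.mulRight R Aᵀ - LinearMap.id)

def tSylvesterSpace (H : Matrix ι ι R) : Submodule R (Matrix ι ι R) :=
  LinearMap.ker
    (LinearMap.mulRight R H + LinearMap.mulLeft R H ∘ₗ (transposeLinearEquiv ι ι R R).toLinearMap)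

theorem mem_twistedSkew {A C : Matrix ι ι R} : C ∈ twistedSkew A ↔ C + A * Cᵀ = 0 := by
  simp [twistedSkew]

theorem mem_congrFixed {A C : Matrix ι ι R} : C ∈ congrFixed A ↔ A * C * Aᵀ = C := by
  simp [congrFixed, sub_eq_zero, Matrix.mul_assoc]

theorem mem_tSylvesterSpace {H X : Matrix ι ι R} :
    X ∈ tSylvesterSpace H ↔ X * H + H * Xᵀ = 0 := by
  simp [tSylvesterSpace]

theorem twistedSkew_le_congrFixed (A : Matrix ι ι R) : twistedSkew A ≤ congrFixed A := by
  intro C hC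
  rw [mem_twistedSkew, add_eq_zero_iff_eq_neg] at hC
  have hCt : C * Aᵀ = -Cᵀ := by
    conv_rhs => rw [hC]
    rw [transpose_neg, transpose_mul, transpose_transpose, neg_neg]
  rw [mem_congrFixed, Matrix.mul_assoc, hCt, Matrix.mul_neg, ← hC]

theorem congrFixed_neg (A : Matrix ι ι R) : congrFixed (-A) = congrFixed A := by
  ext C
  simp [mem_congrFixed]

def congrInvolution (Q : Matrix ι ι R) (hQ : Q * Q = 1) : Matrix ι ι R ≃ₗ[R] Matrix ι ι R :=
  LinearEquiv.ofInvolutive (LinearMap.mulLeft R Q ∘ₗ LinearMap.mulRight R Qᵀ) fun C => by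
    have hQt : Qᵀ * Qᵀ = 1 := by rw [← transpose_mul, hQ, transpose_one]
    simp only [LinearMap.comp_apply, LinearMap.mulRight_apply, LinearMap.mulLeft_apply]
    rw [← Matrix.mul_assoc, ← Matrix.mul_assoc, hQ, Matrix.one_mul, Matrix.mul_assoc, hQt,
      Matrix.mul_one]

theorem map_congrInvolution_twistedSkew {Q : Matrix ι ι R} (hQ : Q * Q = 1) (A : Matrix ι ι R) :
    (twistedSkew A).map (congrInvolution Q hQ : Matrix ι ι R →ₗ[R] Matrix ι ι R) =
      twistedSkew (Q * A * Q) := by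
  ext C
  have hQt : Qᵀ * Qᵀ = 1 := by rw [← transpose_mul, hQ, transpose_one]
  rw [Submodule.mem_map_equiv, mem_twistedSkew, mem_twistedSkew,
    ← (congrInvolution Q hQ).map_eq_zero_iff]
  change Q * ((Q * (C * Qᵀ) + A * (Q * (C * Qᵀ))ᵀ) * Qᵀ) = 0 ↔ _
  simp only [transpose_mul, transpose_transpose, Matrix.mul_add, Matrix.add_mul,
    ← Matrix.mul_assoc, hQ, Matrix.one_mul]
  simp only [Matrix.mul_assoc, hQt, Matrix.mul_one]

theorem finrank_twistedSkew_congr {Q : Matrix ι ι R} (hQ : Q * Q = 1) (A : Matrix ι ι R) :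
    Module.finrank R (twistedSkew (Q * A * Q)) = Module.finrank R (twistedSkew A) := by
  rw [← map_congrInvolution_twistedSkew hQ A, LinearEquiv.finrank_map_eq]

theorem mul_add_transpose_eq_zero_iff {M B : Matrix ι ι R} :
    B * M + Bᵀ = 0 ↔ B ∈ twistedSkew Mᵀ := by
  rw [mem_twistedSkew, ← transpose_eq_zero, transpose_add, transpose_mul, transpose_transpose,
    add_comm]

theorem fromBlocks_mem_tSylvesterSpace_iff (M A B C D : Matrix ι ι R) :
    fromBlocks A B C D ∈ tSylvesterSpace (fromBlocks 0 1 M 0) ↔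
      Mᵀ * A = A * Mᵀ ∧ B ∈ twistedSkew Mᵀ ∧ C ∈ twistedSkew M ∧ D = -Aᵀ := by
  rw [mem_tSylvesterSpace, fromBlocks_transpose, fromBlocks_multiply, fromBlocks_multiply,
    fromBlocks_add, ← fromBlocks_zero, fromBlocks_inj]
  simp only [Matrix.mul_zero, Matrix.zero_mul, Matrix.mul_one, Matrix.one_mul, add_zero, zero_add]
  have hD : A + Dᵀ = 0 ↔ D = -Aᵀ := by
    rw [← transpose_eq_zero, transpose_add, transpose_transpose, add_eq_zero_iff_eq_neg']
  rw [hD, mul_add_transpose_eq_zero_iff, ← mem_twistedSkew]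
  constructor
  · rintro ⟨hB, hD, hA, hC⟩
    refine ⟨?_, hB, hC, hD⟩
    rw [hD, Matrix.neg_mul, neg_add_eq_zero] at hA
    simpa using congrArg transpose hA
  · rintro ⟨hA, hB, hC, hD⟩
    refine ⟨hB, hD, ?_, hC⟩
    rw [hD, Matrix.neg_mul, neg_add_eq_zero]
    simpa using congrArg transpose hA

def tSylvesterBlocks (M : Matrix ι ι R) :
    Subalgebra.centralizer R {Mᵀ} × twistedSkew Mᵀ × twistedSkew M →ₗ[R]
      Matrix (ι ⊕ ι) (ι ⊕ ι) R where
  toFun x := fromBlocks x.1 x.2.1 x.2.2 (-(x.1 : Matrix ι ι R)ᵀ)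
  map_add' x y := by simp [fromBlocks_add, add_comm]
  map_smul' c x := by simp [fromBlocks_smul]

theorem tSylvesterBlocks_injective (M : Matrix ι ι R) :
    Function.Injective (tSylvesterBlocks M) := by
  rintro ⟨A, B, C⟩ ⟨A', B', C'⟩ h
  obtain ⟨hA, hB, hC, -⟩ := fromBlocks_inj.mp h
  simp only [Prod.mk.injEq]
  exact ⟨Subtype.ext hA, Subtype.ext hB, Subtype.ext hC⟩

theorem range_tSylvesterBlocks (M : Matrix ι ι R) :
    LinearMap.range (tSylvesterBlocks M) = tSylvesterSpace (fromBlocks 0 1 M 0) := by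
  ext X
  constructor
  · rintro ⟨⟨A, B, C⟩, rfl⟩
    refine (fromBlocks_mem_tSylvesterSpace_iff M _ _ _ _).mpr ⟨?_, B.2, C.2, rfl⟩
    exact (Subalgebra.mem_centralizer_iff R).mp A.2 _ rfl
  · intro hX
    rw [← fromBlocks_toBlocks X, fromBlocks_mem_tSylvesterSpace_iff] at hX
    obtain ⟨hA, hB, hC, hD⟩ := hX
    refine ⟨⟨⟨X.toBlocks₁₁, ?_⟩, ⟨_, hB⟩, ⟨_, hC⟩⟩, ?_⟩
    · rw [Subalgebra.mem_centralizer_iff]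
      rintro _ rfl
      exact hA
    · conv_rhs => rw [← fromBlocks_toBlocks X, hD]
      rfl

end CommRing

section Field

variable [Field K]

theorem finrank_tSylvesterSpace_fromBlocks (M : Matrix ι ι K) :
    Module.finrank K (tSylvesterSpace (fromBlocks 0 1 M 0)) =
      Module.finrank K (Subalgebra.centralizer K {Mᵀ}) + Module.finrank K (twistedSkew Mᵀ) +
        Module.finrank K (twistedSkew M) := by
  rw [← range_tSylvesterBlocks, LinearMap.finrank_range_of_inj (tSylvesterBlocks_injective M),
    Module.finrank_prod, Module.finrank_prod, add_assoc]

theorem twistedSkew_inf_twistedSkew_neg {A : Matrix ι ι K} (h2 : (2 : K) ≠ 0) :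
    twistedSkew A ⊓ twistedSkew (-A) = ⊥ := by
  rw [eq_bot_iff]
  intro C hC
  obtain ⟨hC, hC'⟩ := Submodule.mem_inf.mp hC
  rw [mem_twistedSkew] at hC hC'
  rw [Matrix.neg_mul] at hC'
  have h : (2 : K) • C = 0 := by
    calc (2 : K) • C = (C + A * Cᵀ) + (C + -(A * Cᵀ)) := by rw [two_smul]; abel
      _ = 0 := by rw [hC, hC', add_zero]
  exact (smul_eq_zero.mp h).resolve_left h2

theorem finrank_twistedSkew_add_finrank_twistedSkew_neg_le {A : Matrix ι ι K}
    (h2 : (2 : K) ≠ 0) :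
    Module.finrank K (twistedSkew A) + Module.finrank K (twistedSkew (-A)) ≤
      Module.finrank K (congrFixed A) := by
  have hsup : twistedSkew A ⊔ twistedSkew (-A) ≤ congrFixed A :=
    sup_le (twistedSkew_le_congrFixed A) (congrFixed_neg A ▸ twistedSkew_le_congrFixed (-A))
  rw [← Submodule.finrank_sup_add_finrank_inf_eq, twistedSkew_inf_twistedSkew_neg h2,
    finrank_bot, add_zero]
  exact Submodule.finrank_mono hsup

end Field

end Matrix

variable {n : ℕ}

def unitVec (n d : ℕ) : Fin n → ℂ := fun i => if (i : ℕ) = d then 1 else 0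

def firstColumn (n : ℕ) : Matrix (Fin n) (Fin n) ℂ →ₗ[ℂ] Fin n → ℂ :=
  (mulVecBilin ℂ ℂ).flip (unitVec n 0)

theorem firstColumn_apply (M : Matrix (Fin n) (Fin n) ℂ) :
    firstColumn n M = M *ᵥ unitVec n 0 := rfl

theorem eq_zero_of_mulVec_unitVec {M : Matrix (Fin n) (Fin n) ℂ}
    (h : ∀ d, M *ᵥ unitVec n d = 0) : M = 0 := by
  ext i j
  simpa [mulVec, dotProduct, unitVec, Fin.val_inj] using congrFun (h j) i

theorem transpose_Jmat_mulVec_unitVec (ν : ℂ) (d : ℕ) :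
    (Jmat n ν)ᵀ *ᵥ unitVec n d = ν • unitVec n d + unitVec n (d + 1) := by
  ext i
  simp only [mulVec, dotProduct, transpose_apply, Jmat, of_apply, unitVec, Pi.add_apply,
    Pi.smul_apply, smul_eq_mul, mul_ite, mul_one, mul_zero, ← Fin.val_inj]
  rw [Fin.sum_univ_eq_sum_range (fun k => if k = d then
    (if k = (i : ℕ) then ν else if (i : ℕ) = k + 1 then 1 else 0) else 0), sum_ite_eq']
  simp only [mem_range]
  have := i.isLt
  split_ifs <;> first | omega | simp

theorem Jmat_det (ν : ℂ) : (Jmat n ν).det = ν ^ n := by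
  rw [det_of_isUpperTriangular]
  · simp [Jmat]
  · intro i j hij
    have : (j : ℕ) < i := hij
    simp [Jmat, show i ≠ j by omega, show (j : ℕ) ≠ i + 1 by omega]

theorem isUnit_Jmat_s16 {ν : ℂ} (hν : ν ≠ 0) : IsUnit (Jmat n ν) := by
  rw [isUnit_iff_isUnit_det, Jmat_det]
  exact (pow_ne_zero n hν).isUnit

theorem Rev_eq_toMatrix : Rev n = (Fin.revPerm : Equiv.Perm (Fin n)).toPEquiv.toMatrix := by
  ext i j
  simp [Rev, PEquiv.toMatrix_apply, eq_comm]

theorem Rev_mul_Rev : Rev n * Rev n = 1 := by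
  ext i j
  simp [Rev_eq_toMatrix, PEquiv.toMatrix_toPEquiv_mul, PEquiv.toMatrix_apply, one_apply]

theorem Rev_mul_Jmat_mul_Rev (ν : ℂ) : Rev n * Jmat n ν * Rev n = (Jmat n ν)ᵀ := by
  ext i j
  simp only [Rev_eq_toMatrix, PEquiv.toMatrix_toPEquiv_mul, PEquiv.mul_toMatrix_toPEquiv,
    submatrix_apply, id, transpose_apply, Jmat, of_apply, Fin.revPerm_symm, Fin.revPerm_apply,
    Fin.val_rev, ← Fin.val_inj]
  have := i.isLt
  have := j.isLt
  split_ifs <;> first | rfl | omega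

def signDiag (n : ℕ) : Matrix (Fin n) (Fin n) ℂ := diagonal fun i => (-1) ^ (i : ℕ)

theorem signDiag_mul_signDiag : signDiag n * signDiag n = 1 := by
  simp [signDiag, ← mul_pow]

theorem signDiag_mul_Jmat_mul_signDiag (ν : ℂ) :
    signDiag n * Jmat n ν * signDiag n = -Jmat n (-ν) := by
  ext i j
  simp only [signDiag, diagonal_mul, mul_diagonal, Jmat, of_apply, Matrix.neg_apply]
  have hsq : ((-1 : ℂ) ^ (i : ℕ)) ^ 2 = 1 := by rw [← pow_mul, pow_mul', neg_one_sq, one_pow]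
  split_ifs with hij hj
  · subst hij
    linear_combination ν * hsq
  · rw [hj, pow_succ]
    linear_combination -hsq
  · simp

theorem injective_firstColumn_domRestrict {ν : ℂ} {p : Submodule ℂ (Matrix (Fin n) (Fin n) ℂ)}
    (hp : ∀ C ∈ p, ∀ w, C *ᵥ w = 0 → C *ᵥ ((Jmat n ν)ᵀ *ᵥ w) = 0) :
    Function.Injective ((firstColumn n).domRestrict p) := by
  rw [← LinearMap.ker_eq_bot, Submodule.eq_bot_iff]
  intro C h0
  exact Subtype.ext <| eq_zero_of_mulVec_unitVec <|
    mulVec_eq_zero_of_shift (hp C C.2) (transpose_Jmat_mulVec_unitVec ν) h0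

theorem finrank_centralizer_transpose_Jmat (ν : ℂ) :
    Module.finrank ℂ (Subalgebra.centralizer ℂ {(Jmat n ν)ᵀ}) = n := by
  set Z := Subalgebra.toSubmodule (Subalgebra.centralizer ℂ {(Jmat n ν)ᵀ})
  have hZ : ∀ P, P ∈ Z ↔ (Jmat n ν)ᵀ * P = P * (Jmat n ν)ᵀ := by
    simp [Z, Subalgebra.mem_centralizer_iff]
  have hinj := injective_firstColumn_domRestrict (p := Z) (ν := ν) fun P hP w hw => by
    rw [mulVec_mulVec, ← (hZ P).mp hP, ← mulVec_mulVec, hw, mulVec_zero]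
  have hsurj : Function.Surjective ((firstColumn n).domRestrict Z) := by
    set L := (Jmat n ν)ᵀ - ν • 1
    have hL : ∀ d, L ^ d ∈ Z := fun d => (hZ _).mpr
      (((Commute.refl _).sub_right ((Commute.one_right _).smul_right ν)).pow_right d).eq
    have hLd : ∀ d, (L ^ d) *ᵥ unitVec n 0 = unitVec n d := by
      intro d
      induction d with
      | zero => rw [pow_zero, one_mulVec]
      | succ d ih =>
        rw [pow_succ', ← mulVec_mulVec, ih, sub_mulVec, transpose_Jmat_mulVec_unitVec,
          smul_mulVec, one_mulVec, add_sub_cancel_left]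
    intro w
    refine ⟨∑ d : Fin n, w d • ⟨L ^ (d : ℕ), hL d⟩, ?_⟩
    ext i
    simp [firstColumn_apply, hLd, unitVec, Finset.sum_apply, Fin.val_inj]
  rw [← Subalgebra.finrank_toSubmodule,
    (LinearEquiv.ofBijective _ ⟨hinj, hsurj⟩).finrank_eq, Module.finrank_fin_fun]

theorem finrank_congrFixed_Jmat_le {ν : ℂ} (hν : ν ≠ 0) :
    Module.finrank ℂ (congrFixed (Jmat n ν)) ≤ n := by
  have hinj := injective_firstColumn_domRestrict (p := congrFixed (Jmat n ν)) (ν := ν)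
      fun C hC w hw => by
    apply mulVec_injective_iff_isUnit.mpr (isUnit_Jmat_s16 hν)
    rw [mulVec_mulVec, mulVec_mulVec, mem_congrFixed.mp hC, hw, mulVec_zero]
  simpa using LinearMap.finrank_le_finrank_of_injective hinj

theorem finrank_twistedSkew_Jmat_add_le {ν : ℂ} (hν : ν ≠ 0) :
    Module.finrank ℂ (twistedSkew (Jmat n ν)) + Module.finrank ℂ (twistedSkew (Jmat n (-ν))) ≤
      n := by
  rw [← finrank_twistedSkew_congr signDiag_mul_signDiag (Jmat n (-ν)),
    signDiag_mul_Jmat_mul_signDiag, neg_neg]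
  exact (finrank_twistedSkew_add_finrank_twistedSkew_neg_le two_ne_zero).trans
    (finrank_congrFixed_Jmat_le hν)

theorem finrank_twistedSkew_transpose_Jmat (ν : ℂ) :
    Module.finrank ℂ (twistedSkew (Jmat n ν)ᵀ) = Module.finrank ℂ (twistedSkew (Jmat n ν)) := by
  rw [← Rev_mul_Jmat_mul_Rev, finrank_twistedSkew_congr Rev_mul_Rev]

/-- The coefficient of `xⁱ yʲ` in `h_{m-1}(1 + x, -1 - y)`, where `h_k(u, w) = ∑_{a+b=k} uᵃ wᵇ`;
the shift by one lets `altBinom 0 = 0` stand for `h_{-1}`. -/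
def altBinom (m i j : ℕ) : ℤ :=
  ∑ b ∈ range m, (-1) ^ b * ((m - 1 - b).choose i * b.choose j)

theorem altBinom_eq_zero {m i j : ℕ} (h : m ≤ i + j) : altBinom m i j = 0 := by
  refine sum_eq_zero fun b hb => ?_
  rw [mem_range] at hb
  rcases lt_or_ge (m - 1 - b) i with hi | hi
  · simp [Nat.choose_eq_zero_of_lt hi]
  · simp [Nat.choose_eq_zero_of_lt (show b < j by omega)]

theorem altBinom_succ_self_zero (k : ℕ) : altBinom (k + 1) k 0 = 1 := by
  rw [altBinom, sum_eq_single 0]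
  · simp
  · intro b hb hb0
    rw [mem_range] at hb
    simp [Nat.choose_eq_zero_of_lt (show k - b < k by omega)]
  · simp

theorem altBinom_swap (m i j : ℕ) : altBinom m j i = (-1) ^ (m + 1) * altBinom m i j := by
  rw [altBinom, altBinom, mul_sum, ← sum_range_reflect]
  refine sum_congr rfl fun b hb => ?_
  rw [mem_range] at hb
  rw [show m - 1 - (m - 1 - b) = b by omega]
  have hsign : ((-1 : ℤ) ^ (m - 1 - b)) = (-1) ^ (m + 1) * (-1) ^ b := by
    rw [← pow_add, show m + 1 + b = (m - 1 - b) + 2 * (b + 1) by omega, pow_add, pow_mul]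
    norm_num
  rw [hsign]
  ring

theorem altBinom_succ_succ (m i j : ℕ) :
    altBinom (m + 1) (i + 1) j = altBinom m (i + 1) j + altBinom m i j := by
  rw [altBinom, altBinom, altBinom, sum_range_succ, ← sum_add_distrib]
  simp only [add_tsub_cancel_right, tsub_self, Nat.choose_zero_succ, Nat.cast_zero, zero_mul,
    mul_zero, add_zero]
  refine sum_congr rfl fun b hb => ?_
  rw [mem_range] at hb
  rw [show m - b = (m - 1 - b) + 1 by omega, Nat.choose_succ_succ]
  push_cast
  ring

/-- The coefficient of `xⁱ yʲ` in `c(x, y) = (h_k + h_{k-1})(1 + 2νx, -1 - 2νy)`, where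
`ν = (-1)^(k+1)`. The identity `x c(x, y) + (1 + νx) c(y, x) = c(y, 0)` is `skewCoeff_recurrence`,
i.e. `C + J_n(ν) Cᵀ = 0` for `C = (skewCoeff k i j)`. -/
def skewCoeff (k i j : ℕ) : ℤ :=
  (2 * (-1) ^ (k + 1)) ^ (i + j) * (altBinom (k + 1) i j + altBinom k i j)

theorem skewCoeff_eq_zero {k i j : ℕ} (h : k < i + j) : skewCoeff k i j = 0 := by
  rw [skewCoeff, altBinom_eq_zero (by omega), altBinom_eq_zero (by omega)]
  ring

theorem skewCoeff_self_zero_ne_zero (k : ℕ) : skewCoeff k k 0 ≠ 0 := by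
  rw [skewCoeff, altBinom_succ_self_zero, altBinom_eq_zero (by omega)]
  simp

theorem skewCoeff_recurrence (k i j : ℕ) :
    skewCoeff k i j + (-1) ^ (k + 1) * skewCoeff k j i + skewCoeff k j (i + 1) = 0 := by
  set ν : ℤ := (-1) ^ (k + 1) with hν
  have hν2 : ν ^ 2 = 1 := by rw [hν, ← pow_mul, pow_mul', neg_one_sq, one_pow]
  have hk2 : (-1 : ℤ) ^ (k + 1 + 1) = -ν := by rw [pow_succ, hν]; ring
  simp only [skewCoeff]
  rw [altBinom_swap (k + 1) i j, altBinom_swap k i j, altBinom_swap (k + 1) (i + 1) j,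
    altBinom_swap k (i + 1) j, altBinom_succ_succ, hk2, ← hν, add_comm j i,
    show j + (i + 1) = (i + j) + 1 by ring, pow_succ]
  linear_combination (2 * ν) ^ (i + j) * (-(altBinom (k + 1) i j) - altBinom k i j) * hν2

def skewSolution (n k : ℕ) : Matrix (Fin n) (Fin n) ℂ := of fun i j => (skewCoeff k i j : ℂ)

theorem skewSolution_mem_twistedSkew {k : ℕ} (hk : k < n) :
    skewSolution n k ∈ twistedSkew (Jmat n ((-1) ^ (k + 1))) := by
  rw [mem_twistedSkew]
  ext i j
  simp only [skewSolution, Matrix.add_apply, mul_apply, transpose_apply, of_apply, Jmat,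
    Matrix.zero_apply, ← Fin.val_inj]
  rw [Fin.sum_univ_eq_sum_range (fun l => (if (i : ℕ) = l then ((-1) ^ (k + 1) : ℂ)
    else if l = i + 1 then 1 else 0) * (skewCoeff k j l : ℂ)), sum_eq_add (i : ℕ) ((i : ℕ) + 1)]
  · simp only [if_neg (Nat.ne_of_lt (Nat.lt_succ_self _)), if_pos, one_mul, ← add_assoc]
    exact_mod_cast skewCoeff_recurrence k i j
  · omega
  · intro l _ hl
    rw [if_neg (Ne.symm hl.1), if_neg hl.2, zero_mul]
  · intro h
    exact absurd (mem_range.mpr i.isLt) h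
  · intro h
    rw [skewCoeff_eq_zero (by rw [mem_range] at h; omega), Int.cast_zero, mul_zero]

theorem linearIndependent_skewSolution {k : ℕ} (hk : k < n) {p : ℕ} (hp : 2 * p ≤ k + 2) :
    LinearIndependent ℂ fun t : Fin p => skewSolution n (k - 2 * t) := by
  induction p generalizing k with
  | zero => exact linearIndependent_empty_type
  | succ p ih =>
    rw [linearIndependent_finSucc]
    have htail : Fin.tail (fun t : Fin (p + 1) => skewSolution n (k - 2 * t)) =
        fun t : Fin p => skewSolution n (k - 2 - 2 * t) := by
      ext t : 1
      simp only [Fin.tail, Fin.val_succ]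
      congr 1
      omega
    rw [htail]
    refine ⟨ih (by omega) (by omega), fun hmem => ?_⟩
    let entry := entryLinearMap ℂ ℂ (⟨k, hk⟩ : Fin n) (⟨0, by omega⟩ : Fin n)
    have hspan : Submodule.span ℂ (Set.range fun t : Fin p => skewSolution n (k - 2 - 2 * t)) ≤
        LinearMap.ker entry := by
      rw [Submodule.span_le]
      rintro _ ⟨t, rfl⟩
      have := t.isLt
      simp [entry, skewSolution, skewCoeff_eq_zero (show k - 2 - 2 * t < k + 0 by omega)]
    have h0 := LinearMap.mem_ker.mp (hspan hmem)
    simp [entry, skewSolution, skewCoeff_self_zero_ne_zero] at h0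

theorem le_finrank_twistedSkew_Jmat {m : ℕ} (hm : m ≤ n) :
    (m + 1) / 2 ≤ Module.finrank ℂ (twistedSkew (Jmat n ((-1) ^ m))) := by
  rcases Nat.eq_zero_or_pos m with rfl | hm0
  · simp
  have hind := linearIndependent_skewSolution (n := n) (k := m - 1) (p := (m + 1) / 2)
    (by omega) (by omega)
  have hle : Submodule.span ℂ
      (Set.range fun t : Fin ((m + 1) / 2) => skewSolution n (m - 1 - 2 * t)) ≤
        twistedSkew (Jmat n ((-1) ^ m)) := by
    rw [Submodule.span_le]
    rintro _ ⟨t, rfl⟩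
    have ht := t.isLt
    have hsign : ((-1 : ℂ)) ^ (m - 1 - 2 * t + 1) = (-1) ^ m := by
      rw [neg_one_pow_eq_pow_mod_two, neg_one_pow_eq_pow_mod_two (n := m)]
      congr 1
      omega
    rw [← hsign]
    exact skewSolution_mem_twistedSkew (by omega)
  simpa [finrank_span_eq_card hind] using Submodule.finrank_mono hle

theorem finrank_twistedSkew_Jmat :
    Module.finrank ℂ (twistedSkew (Jmat n ((-1) ^ n))) = (n + 1) / 2 := by
  have hlow := le_finrank_twistedSkew_Jmat (n := n) le_rfl
  have hlow' : n / 2 ≤ Module.finrank ℂ (twistedSkew (Jmat n (-(-1) ^ n))) := by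
    rcases n with _ | n
    · simp
    · rw [pow_succ, mul_neg_one, neg_neg]
      exact le_finrank_twistedSkew_Jmat (by omega)
  have hup := finrank_twistedSkew_Jmat_add_le (n := n) (ν := (-1) ^ n) (by simp)
  omega

theorem stmt_16_general (n : ℕ) (μ : ℂ) (hμ : μ = (-1) ^ n) :
    ∃ S : Submodule ℂ (Matrix (Fin n ⊕ Fin n) (Fin n ⊕ Fin n) ℂ),
      (∀ X, X ∈ S ↔ X * Hmat n μ + Hmat n μ * Xᵀ = 0) ∧
      Module.finrank ℂ S = n + 2 * ((n + 1) / 2) := by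
  refine ⟨tSylvesterSpace (Hmat n μ), fun X => mem_tSylvesterSpace, ?_⟩
  rw [Hmat, finrank_tSylvesterSpace_fromBlocks, finrank_centralizer_transpose_Jmat,
    finrank_twistedSkew_transpose_Jmat, hμ, finrank_twistedSkew_Jmat]
  ring

/-- the solutions `X` of `X·H_{2n}(μ) + H_{2n}(μ)·Xᵀ = 0` (with `μ = (-1)^n`)
form a complex subspace of dimension `n + 2⌈n/2⌉`. -/
theorem stmt_16 (n : ℕ) (hn : 1 ≤ n) (μ : ℂ) (hμ : μ = (-1) ^ n) :
    ∃ S : Submodule ℂ (Matrix (Fin n ⊕ Fin n) (Fin n ⊕ Fin n) ℂ),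
      (∀ X, X ∈ S ↔ X * Hmat n μ + Hmat n μ * Xᵀ = 0) ∧
      Module.finrank ℂ S = n + 2 * ((n + 1) / 2) :=
  stmt_16_general n μ hμ
end
end
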